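/- Let G be a finite 2-group and let 1 → Z/2Z →^i G' →^s G → 1 be a group extension with the 2-lift property, with T = im(i). Then for any cyclic subgroup V of G, the subgroup s^{-1}(V) of G' is abelian and is an internal direct product of T with a subgroup U of G'. -/

import Mathlib

open scoped TensorProduct Classical

noncomputable section

universe u

namespace Paper

variable {Γ : Type*} [Group Γ]

/-- The differential on inhomogeneous mod 2 cochains of a group, with trivial
coefficients in `ZMod 2`. -/
def d {n : ℕ} (f : (Fin n → Γ) → ZMod 2) : (Fin (n + 1) → Γ) → ZMod 2 :=
  fun g => f (fun i => g i.succ) + ∑ j : Fin (n + 1), f (Fin.contractNth j (· * ·) g)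

/-- `f` is an (inhomogeneous, mod 2) `n`-cocycle. -/
def IsCocycle {n : ℕ} (f : (Fin n → Γ) → ZMod 2) : Prop := d f = 0

/-- `f` is an (inhomogeneous, mod 2) coboundary; equivalently, the cohomology class of
the cocycle `f` vanishes. -/
def IsCoboundary : {n : ℕ} → ((Fin n → Γ) → ZMod 2) → Prop
  | 0, f => f = 0
  | n + 1, f => ∃ h : (Fin n → Γ) → ZMod 2, d h = f

/-- The cup product of mod 2 cochains (trivial coefficients). -/
def cup {m n : ℕ} (f : (Fin m → Γ) → ZMod 2) (h : (Fin n → Γ) → ZMod 2) :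
    (Fin (m + n) → Γ) → ZMod 2 :=
  fun g => f (fun i => g (Fin.castAdd n i)) * h (fun i => g (Fin.natAdd m i))

/-- Iterated cup powers of a degree 2 cochain. -/
def cupPow (f : (Fin 2 → Γ) → ZMod 2) : (k : ℕ) → (Fin (2 * k) → Γ) → ZMod 2
  | 0 => fun _ => 1
  | k + 1 => cup (cupPow f k) f

/-- Restriction of a mod 2 cochain of `G` to a subgroup `H`. -/
def res {G : Type*} [Group G] (H : Subgroup G) {n : ℕ}
    (f : (Fin n → G) → ZMod 2) : (Fin n → H) → ZMod 2 :=
  fun g => f fun i => (g i : G)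

/-- A group `G` is 2-reduced if `H²(G, ℤ/2)` contains no nonzero nilpotent element of the
mod 2 cohomology ring `H^*(G, ℤ/2)`: every 2-cocycle, some nonzero cup power of which is a
coboundary, is itself a coboundary. -/
def IsTwoReduced (G : Type*) [Group G] : Prop :=
  ∀ f : (Fin 2 → G) → ZMod 2, IsCocycle f →
    (∃ k : ℕ, 0 < k ∧ IsCoboundary (cupPow f k)) → IsCoboundary f

/-- A (continuous = locally constant) mod 2 cochain of a topological group is a
coboundary for continuous group cohomology. -/
def IsCoboundaryLC {Γ : Type*} [Group Γ] [TopologicalSpace Γ] :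
    {n : ℕ} → ((Fin n → Γ) → ZMod 2) → Prop
  | 0, f => f = 0
  | n + 1, f => ∃ h : (Fin n → Γ) → ZMod 2, IsLocallyConstant h ∧ d h = f

/-- An algebraic (here: separable, since we only use it in characteristic ≠ 2 where we
take care only of separable phenomena) closure of `K`. -/
abbrev Kbar (K : Type*) [Field K] := AlgebraicClosure K

/-- The absolute Galois group of `K`, with its Krull topology. -/
abbrev GalK (K : Type*) [Field K] := Kbar K ≃ₐ[K] Kbar K

/-- A chosen square root of (the image of) `a` in `Kbar K`. -/
def sqrtb (K : Type*) [Field K] (a : K) : Kbar K :=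
  Classical.choose (IsAlgClosed.exists_pow_nat_eq (algebraMap K (Kbar K) a) (n := 2)
    (by norm_num))

/-- The Kummer 1-cocycle of the absolute Galois group of `K` attached to the square class
of `a ∈ K`: its class is the image of `a` under `K^×/(K^×)² ≅ H¹(G_K, ℤ/2)`. -/
def sqClass (K : Type*) [Field K] (a : K) : (Fin 1 → GalK K) → ZMod 2 :=
  fun g => if g 0 (sqrtb K a) = sqrtb K a then 0 else 1

/-- A cocycle representing the `m`-th Hasse-Witt invariant
`w_m(q) = ∑_{i₁ < ⋯ < i_m} (a_{i₁})⋯(a_{i_m}) ∈ H^m(G_K, ℤ/2)`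
of the diagonal quadratic form `⟨a 0, …, a (n-1)⟩` over `K`. -/
def hw (K : Type*) [Field K] {n : ℕ} (a : Fin n → K) (m : ℕ) :
    (Fin m → GalK K) → ZMod 2 :=
  fun g =>
    ∑ s ∈ (Finset.powersetCard m (Finset.univ : Finset (Fin n))).attach,
      ∏ j : Fin m,
        sqClass K (a ((s.1.orderIsoOfFin (Finset.mem_powersetCard.mp s.2).2 j : Fin n)))
          (fun _ => g j)

/-- The trace form `q_L(x) = Tr_{L/K}(x²)` of a `K`-algebra `L`, as a quadratic form. -/
def traceFormQ (K L : Type*) [Field K] [CommRing L] [Algebra K L] : QuadraticForm K L :=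
  LinearMap.BilinMap.toQuadraticMap (Algebra.traceForm K L)

/-- `L` is a `G`-Galois algebra over `K`: an étale `K`-algebra of degree `|G|` on which `G`
acts (by `K`-algebra automorphisms) in such a way that the action on
`Hom^{alg}_K(L, K^s)` is simply transitive. -/
def IsGaloisAlgebra (G : Type*) [Group G] (K L : Type u) [Field K] [CommRing L] [Algebra K L]
    [MulSemiringAction G L] [SMulCommClass G K L] : Prop :=
  Algebra.Etale K L ∧ Module.finrank K L = Nat.card G ∧
    ∀ χ χ' : L →ₐ[K] Kbar K, ∃! g : G, χ' = χ.comp (MulSemiringAction.toAlgHom K L g)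

/-- `L ⊗_K K_v` is a split algebra at the real place of `K` given by the embedding
`φ : K → ℝ`. -/
def SplitsAtReal (K L : Type*) [Field K] [CommRing L] [Algebra K L] (n : ℕ)
    (φ : K →+* ℝ) : Prop :=
  letI : Algebra K ℝ := φ.toAlgebra
  Nonempty (TensorProduct K ℝ L ≃ₐ[ℝ] (Fin n → ℝ))

/-- An étale `ℚ`-algebra of degree `n` is totally real if `L ⊗_ℚ ℝ` is split. -/
def TotallyRealAlg (L : Type*) [CommRing L] [Algebra ℚ L] (n : ℕ) : Prop :=
  Nonempty (TensorProduct ℚ ℝ L ≃ₐ[ℝ] (Fin n → ℝ))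

/-- An étale `ℚ`-algebra of degree `n` is totally imaginary if `L ⊗_ℚ ℝ` is a product of
`n/2` copies of `ℂ`. -/
def TotallyImaginaryAlg (L : Type*) [CommRing L] [Algebra ℚ L] (n : ℕ) : Prop :=
  Nonempty (TensorProduct ℚ ℝ L ≃ₐ[ℝ] (Fin (n / 2) → ℂ))

/-- A group is metacyclic if it is an extension of a cyclic group by a cyclic group. -/
def IsMetacyclic (G : Type*) [Group G] : Prop :=
  ∃ N : Subgroup G, IsCyclic N ∧ ∃ hN : N.Normal, haveI := hN; IsCyclic (G ⧸ N)


/-- The unit quadratic form `⟨1, …, 1⟩` on `ι → k`. -/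
def unitQF (k : Type*) [Field k] (ι : Type*) [Fintype ι] : QuadraticForm k (ι → k) :=
  QuadraticMap.weightedSumSquares k fun _ : ι => (1 : k)

end Paper

/-
A normal subgroup of order 2 is central, so `s⁻¹(V)` is a central extension of the cyclic group
`V` and hence abelian. For the splitting, let `g` generate `V`, of order `2^(k+1)`, and lift it to
`w`. Then `w^(2^k)` and a lift `g'` of order 2 of `g^(2^k)` differ by a central element `t` with
`t² = 1`, so `w^(2^(k+1)) = t² g'² = 1`; hence `⟨w⟩` meets `ker s` trivially and
`ker s ⊔ ⟨w⟩ = s⁻¹(V)`.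
-/

namespace Subgroup

variable {G : Type*} [Group G] {N : Subgroup G}

theorem Normal.le_center_of_card_eq_two (hN : N.Normal) (h2 : Nat.card N = 2) :
    N ≤ center G := by
  intro t ht
  rw [mem_center_iff]
  intro w
  by_cases ht1 : t = 1
  · simp [ht1]
  obtain ⟨b, -, hb⟩ := (Nat.card_eq_two_iff' (1 : N)).mp h2
  have hconj_ne : w * t * w⁻¹ ≠ 1 := by simpa [mul_inv_eq_one] using ht1
  have hconj : w * t * w⁻¹ = t := congrArg Subtype.val <|
    (hb ⟨_, hN.conj_mem t ht w⟩ (by simpa [Subtype.ext_iff] using hconj_ne)).trans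
      (hb ⟨t, ht⟩ (by simpa [Subtype.ext_iff] using ht1)).symm
  calc w * t = w * t * w⁻¹ * w := by group
    _ = t * w := by rw [hconj]

theorem sq_eq_one_of_card_eq_two (h2 : Nat.card N = 2) {t : G} (ht : t ∈ N) : t ^ 2 = 1 := by
  have h := pow_card_eq_one' (x := (⟨t, ht⟩ : N))
  rw [h2] at h
  simpa using congrArg Subtype.val h

end Subgroup

namespace MonoidHom

open Subgroup

variable {G G' : Type*} [Group G] [Group G'] (s : G' →* G)

theorem commute_of_mem_comap_of_isCyclic (hcent : s.ker ≤ center G') (V : Subgroup G)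
    [IsCyclic V] : ∀ x ∈ V.comap s, ∀ y ∈ V.comap s, Commute x y := by
  let f : V.comap s →* V := (s.comp (V.comap s).subtype).codRestrict V fun x => x.2
  have hf : f.ker ≤ center (V.comap s) := fun t ht =>
    mem_center_iff.mpr fun w => Subtype.ext <|
      mem_center_iff.mp (hcent (congrArg Subtype.val ht)) w
  intro x hx y hy
  exact congrArg Subtype.val <|
    (f.isMulCommutative_of_isCyclic_of_ker_le_center hf).is_comm.comm ⟨x, hx⟩ ⟨y, hy⟩

theorem ker_inf_zpowers_eq_bot {w : G'} (hw : w ^ orderOf (s w) = 1) :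
    s.ker ⊓ zpowers w = ⊥ := by
  rw [eq_bot_iff]
  rintro x ⟨hx, m, rfl⟩
  obtain ⟨q, rfl⟩ : (orderOf (s w) : ℤ) ∣ m := by
    rw [orderOf_dvd_iff_zpow_eq_one, ← map_zpow]
    exact hx
  simp [zpow_mul, hw]

theorem ker_sup_zpowers (w : G') : s.ker ⊔ zpowers w = (zpowers (s w)).comap s := by
  rw [← map_zpowers, comap_map_eq, sup_comm]

theorem exists_lift_pow_orderOf_eq_one (hs : Function.Surjective s) (hcent : s.ker ≤ center G')
    (hsq : ∀ t ∈ s.ker, t ^ 2 = 1)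
    (hlift : ∀ g : G, orderOf g = 2 → ∃ g' : G', s g' = g ∧ orderOf g' = 2)
    {g : G} {k : ℕ} (hg : orderOf g = 2 ^ k) : ∃ w : G', s w = g ∧ w ^ orderOf g = 1 := by
  obtain ⟨w, rfl⟩ := hs g
  cases k with
  | zero => exact ⟨1, by rw [map_one, eq_comm]; simpa using hg, one_pow _⟩
  | succ k =>
    have hord : orderOf (s w ^ 2 ^ k) = 2 := by
      have := orderOf_pow_orderOf_div (x := s w) (by simp [hg]) (n := 2) (by simp [hg, pow_succ])
      simpa [hg, pow_succ] using this
    obtain ⟨g', hsg', hg'⟩ := hlift _ hord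
    set t := w ^ 2 ^ k * g'⁻¹
    have ht : t ∈ s.ker := by simp [t, hsg']
    have hcomm : Commute t g' := (mem_center_iff.mp (hcent ht) g').symm
    refine ⟨w, rfl, ?_⟩
    calc w ^ orderOf (s w) = (t * g') ^ 2 := by simp [t, hg, pow_succ, pow_mul]
      _ = 1 := by rw [hcomm.mul_pow, hsq t ht, ← hg', pow_orderOf_eq_one, one_mul]

end MonoidHom

theorem statement_15_general (G : Type*) [Group G] (hp : IsPGroup 2 G)
    (G' : Type*) [Group G'] (s : G' →* G) (hs : Function.Surjective s)
    (hker : Nat.card ↥s.ker = 2)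
    (hlift : ∀ g : G, orderOf g = 2 → ∃ g' : G', s g' = g ∧ orderOf g' = 2)
    (V : Subgroup G) (hV : IsCyclic ↥V) :
    (∀ x ∈ V.comap s, ∀ y ∈ V.comap s, Commute x y) ∧
    ∃ U : Subgroup G', s.ker ⊓ U = ⊥ ∧ s.ker ⊔ U = V.comap s := by
  have hcent := s.normal_ker.le_center_of_card_eq_two hker
  refine ⟨s.commute_of_mem_comap_of_isCyclic hcent V, ?_⟩
  obtain ⟨g, rfl⟩ := (V.isCyclic_iff_exists_zpowers_eq_top).mp hV
  obtain ⟨k, hk⟩ := IsPGroup.iff_orderOf.mp hp g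
  obtain ⟨w, rfl, hw⟩ := s.exists_lift_pow_orderOf_eq_one hs hcent
    (fun t => Subgroup.sq_eq_one_of_card_eq_two hker) hlift hk
  exact ⟨Subgroup.zpowers w, s.ker_inf_zpowers_eq_bot hw, s.ker_sup_zpowers w⟩

/-- Let `G` be a finite 2-group and `1 → ℤ/2 → G' →ˢ G → 1` an extension
with the 2-lift property, `T = im(i) = ker(s)`. For any cyclic subgroup `V` of `G`, the
subgroup `s⁻¹(V)` is abelian and is the internal direct product of `T` and a subgroup `U`. -/
theorem statement_15 (G : Type*) [Group G] [Finite G] (hp : IsPGroup 2 G)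
    (G' : Type*) [Group G'] (s : G' →* G) (hs : Function.Surjective s)
    (hker : Nat.card ↥s.ker = 2)
    (hlift : ∀ g : G, orderOf g = 2 → ∃ g' : G', s g' = g ∧ orderOf g' = 2)
    (V : Subgroup G) (hV : IsCyclic ↥V) :
    (∀ x ∈ V.comap s, ∀ y ∈ V.comap s, Commute x y) ∧
    ∃ U : Subgroup G', s.ker ⊓ U = ⊥ ∧ s.ker ⊔ U = V.comap s :=
  statement_15_general G hp G' s hs hker hlift V hV
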